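/- Fix γ with γ^{l-1} ≤ γ < γ^l for some l, where γ^l := ∫₀¹ σ²(s)/σ̄(s ∧ λ^l) ds are the critical levels. Consider maximizing f(x₁,…,x_{M-1}) = Σᵢ₌₁^{M-1}(∇λᵢ − xᵢ²/(σᵢ²∇λᵢ)) + (∇λ_M − (γ − Σᵢ xᵢ)²/(σ_M²∇λ_M)) subject to Σᵢ₌₁^k (∇λᵢ − xᵢ²/(σᵢ²∇λᵢ)) ≥ 0 for 1 ≤ k ≤ M−1. Then there is a unique global maximizer, with xᵢ* = ∫_{λᵢ₋₁}^{λᵢ} σ²/σ̄ ds when λᵢ ≤ λ^{l-1} and xᵢ* = (∫_{λᵢ₋₁}^{λᵢ} σ² ds / ∫_{λ^{l-1}}^1 σ² ds)·(γ − ∫₀^{λ^{l-1}} σ²/σ̄ ds) when λᵢ > λ^{l-1}, and the maximum value is E_γ = (1 − λ^{l-1}) − (γ − ∫₀^{λ^{l-1}} σ²/σ̄ ds)² / ∫_{λ^{l-1}}^1 σ² ds. -/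

import Mathlib

/-!
The candidate path is certified by Lagrange multipliers. Write `cᵢ = σᵢ² ∇λᵢ` and
`ν = (γ - ∫₀^{λ^{l-1}} σ²/σ̄) / ∫_{λ^{l-1}}^1 σ²`, so that `x*ᵢ = cᵢ / σ̄ᵢ` on the blocks before
`λ^{l-1}` and `x*ᵢ = ν cᵢ` after it. With the tail multipliers `Mᵢ = ν σ̄ᵢ - 1` before `λ^{l-1}`
and `Mᵢ = 0` after it, `x*` is a stationary point of the Lagrangian. The multipliers
`μₖ = Mₖ - Mₖ₊₁` are nonnegative because `σ̄` is non-increasing and `γ ≥ γ^{l-1}` means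
`ν σ̄(λ^{l-1}) ≥ 1`; they only charge the constraints at jumps of `σ̄`, which are active because
`∫σ² = ∫σ̄²` up to every jump of `σ̄`. The same balance, together with `∫₀ᵗ σ² ≤ ∫₀ᵗ σ̄²`, gives
feasibility before `λ^{l-1}` by Abel summation, and feasibility after `λ^{l-1}` is `ν σ̄ ≤ 1`
there, i.e. `γ < γ^l`. As the objective is a concave quadratic, the Lagrangian bound comes with
a quadratic gap, which gives uniqueness.
-/

open MeasureTheory Set

section StepIntegrals

variable {f : ℝ → ℝ} {a b v : ℝ}

lemma intervalIntegrable_of_eqOn_Ioc (hab : a ≤ b) (hf : ∀ s ∈ Ioc a b, f s = v) :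
    IntervalIntegrable f volume a b := by
  rw [intervalIntegrable_iff, uIoc_of_le hab]
  exact (integrableOn_const measure_Ioc_lt_top.ne).congr_fun (fun s hs => (hf s hs).symm)
    measurableSet_Ioc

lemma integral_eq_of_eqOn_Ioc (hab : a ≤ b) (hf : ∀ s ∈ Ioc a b, f s = v) :
    ∫ s in a..b, f s = v * (b - a) := by
  rw [intervalIntegral.integral_of_le hab, setIntegral_congr_fun measurableSet_Ioc hf,
    setIntegral_const, measureReal_def, Real.volume_Ioc, ENNReal.toReal_ofReal (by linarith),
    smul_eq_mul, mul_comm]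

variable {L V : ℕ → ℝ} {p q : ℕ}

lemma intervalIntegrable_of_eqOn_blocks (hL : Monotone L) (hpq : p ≤ q)
    (hf : ∀ n ∈ Ico p q, ∀ s ∈ Ioc (L n) (L (n + 1)), f s = V n) :
    IntervalIntegrable f volume (L p) (L q) :=
  IntervalIntegrable.trans_iterate_Ico hpq fun n hn =>
    intervalIntegrable_of_eqOn_Ioc (hL n.le_succ) (hf n hn)

lemma integral_eq_sum_of_eqOn_blocks (hL : Monotone L) (hpq : p ≤ q)
    (hf : ∀ n ∈ Ico p q, ∀ s ∈ Ioc (L n) (L (n + 1)), f s = V n) :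
    ∫ s in L p..L q, f s = ∑ n ∈ Finset.Ico p q, V n * (L (n + 1) - L n) := by
  rw [← intervalIntegral.sum_integral_adjacent_intervals_Ico hpq fun n hn =>
    intervalIntegrable_of_eqOn_Ioc (hL n.le_succ) (hf n hn)]
  exact Finset.sum_congr rfl fun n hn =>
    integral_eq_of_eqOn_Ioc (hL n.le_succ) (hf n (Finset.mem_Ico.mp hn))

end StepIntegrals

lemma integral_div_comp_min {f g : ℝ → ℝ} {a t₀ t b : ℝ} (hat₀ : a ≤ t₀) (ht₀t : t₀ ≤ t)
    (htb : t ≤ b) (hg : ∀ s ∈ Ioc t₀ t, g s = g t)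
    (hfg : IntervalIntegrable (fun s => f s / g s) volume a t₀)
    (hf : IntervalIntegrable f volume t₀ b) :
    ∫ s in a..b, f s / g (min s t) = (∫ s in a..t₀, f s / g s) + (∫ s in t₀..b, f s) / g t := by
  have hleft : EqOn (fun s => f s / g (min s t)) (fun s => f s / g s) (uIcc a t₀) := by
    intro s hs
    rw [uIcc_of_le hat₀] at hs
    simp only [min_eq_left (hs.2.trans ht₀t)]
  have hright : ∀ s ∈ uIoc t₀ b, f s / g (min s t) = f s / g t := by
    intro s hs
    rw [uIoc_of_le (ht₀t.trans htb)] at hs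
    rcases le_total s t with hst | hts
    · rw [min_eq_left hst, hg s ⟨hs.1, hst⟩]
    · rw [min_eq_right hts]
  have hright_int : IntervalIntegrable (fun s => f s / g (min s t)) volume t₀ b :=
    (hf.div_const (g t)).congr fun s hs => (hright s hs).symm
  rw [← intervalIntegral.integral_add_adjacent_intervals
      ((hfg.congr fun s hs => (hleft (uIoc_subset_uIcc hs)).symm)) hright_int,
    intervalIntegral.integral_congr hleft,
    intervalIntegral.integral_congr_ae (Filter.Eventually.of_forall hright),
    intervalIntegral.integral_div]

section CoarseGrid

variable {m : ℕ} {g : Fin (m + 1) → ℝ}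

lemma exists_mem_Ioc_castSucc_succ {t : ℝ} (ht : t ∈ Ioc (g 0) (g (Fin.last m))) :
    ∃ j : Fin m, t ∈ Ioc (g j.castSucc) (g j.succ) := by
  classical
  let S := Finset.univ.filter fun i => t ≤ g i
  have hS : S.Nonempty := ⟨Fin.last m, by simp [S, ht.2]⟩
  have hmin : t ≤ g (S.min' hS) := (Finset.mem_filter.mp (S.min'_mem hS)).2
  obtain ⟨j, hj⟩ := Fin.eq_succ_of_ne_zero (i := S.min' hS) fun h0 =>
    (h0 ▸ hmin).not_gt ht.1
  refine ⟨j, lt_of_not_ge fun hle => ?_, hj ▸ hmin⟩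
  have := S.min'_le j.castSucc (by simp [S, hle])
  rw [hj] at this
  exact this.not_gt Fin.castSucc_lt_succ

variable {f : ℝ → ℝ} {v : Fin m → ℝ}

lemma eqOn_Ioc_of_forall_notMem_Ioo (hf : ∀ j, ∀ s ∈ Ioc (g j.castSucc) (g j.succ), f s = v j)
    {t₁ t₂ : ℝ} (h₀ : g 0 ≤ t₁) (h₁₂ : t₁ < t₂) (h₂ : t₂ ≤ g (Fin.last m))
    (hno : ∀ j, g j ∉ Ioo t₁ t₂) : ∀ s ∈ Ioc t₁ t₂, f s = f t₂ := by
  obtain ⟨j, hj⟩ := exists_mem_Ioc_castSucc_succ ⟨h₀.trans_lt h₁₂, h₂⟩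
  have hj₁ : g j.castSucc ≤ t₁ := not_lt.mp fun h => hno _ ⟨h, hj.1⟩
  intro s hs
  rw [hf j s ⟨hj₁.trans_lt hs.1, hs.2.trans hj.2⟩, hf j t₂ hj]

lemma antitoneOn_of_eqOn_Ioc (hg : Monotone g) (hv : Antitone v)
    (hf : ∀ j, ∀ s ∈ Ioc (g j.castSucc) (g j.succ), f s = v j) :
    AntitoneOn f (Ioc (g 0) (g (Fin.last m))) := by
  intro s hs s' hs' hss'
  obtain ⟨j, hj⟩ := exists_mem_Ioc_castSucc_succ hs
  obtain ⟨j', hj'⟩ := exists_mem_Ioc_castSucc_succ hs'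
  rw [hf j s hj, hf j' s' hj']
  refine hv (not_lt.mp fun hlt => ?_)
  have := hg (Fin.succ_le_castSucc_iff.mpr hlt)
  linarith [hj.1, hj'.2]

lemma pos_of_eqOn_Ioc (hv : ∀ j, 0 < v j)
    (hf : ∀ j, ∀ s ∈ Ioc (g j.castSucc) (g j.succ), f s = v j) {s : ℝ}
    (hs : s ∈ Ioc (g 0) (g (Fin.last m))) : 0 < f s := by
  obtain ⟨j, hj⟩ := exists_mem_Ioc_castSucc_succ hs
  exact hf j s hj ▸ hv j

lemma integral_eq_integral_of_blocks {f₁ f₂ : ℝ → ℝ} (hg : Monotone g)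
    (h₁ : IntervalIntegrable f₁ volume (g 0) (g (Fin.last m)))
    (h₂ : IntervalIntegrable f₂ volume (g 0) (g (Fin.last m)))
    (hblock : ∀ j : Fin m,
      ∫ s in g j.castSucc..g j.succ, f₁ s = ∫ s in g j.castSucc..g j.succ, f₂ s)
    (j : Fin (m + 1)) : ∫ s in g 0..g j, f₁ s = ∫ s in g 0..g j, f₂ s := by
  have hsub : ∀ i k, uIcc (g i) (g k) ⊆ uIcc (g 0) (g (Fin.last m)) := fun i k =>
    uIcc_subset_uIcc (mem_uIcc_of_le (hg (Fin.zero_le _)) (hg (Fin.le_last _)))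
      (mem_uIcc_of_le (hg (Fin.zero_le _)) (hg (Fin.le_last _)))
  induction j using Fin.induction with
  | zero => simp
  | succ i ih =>
    rw [← intervalIntegral.integral_add_adjacent_intervals (h₁.mono_set (hsub _ _))
        (h₁.mono_set (hsub _ _)),
      ← intervalIntegral.integral_add_adjacent_intervals (h₂.mono_set (hsub _ _))
        (h₂.mono_set (hsub _ _)), ih, hblock i]

end CoarseGrid

/-- `pathBudget a c x q = ∑_{n<q} (∇λₙ - xₙ² / (σₙ² ∇λₙ))` with `a = ∇λ` and `c = σ² ∇λ`;
`pathValue` adds the last block, which receives `γ - ∑ x`. -/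
noncomputable def pathBudget (a c x : ℕ → ℝ) (q : ℕ) : ℝ :=
  ∑ n ∈ Finset.range q, (a n - x n ^ 2 / c n)

noncomputable def pathValue (a c : ℕ → ℝ) (γ : ℝ) (K : ℕ) (x : ℕ → ℝ) : ℝ :=
  pathBudget a c x K + (a K - (γ - ∑ n ∈ Finset.range K, x n) ^ 2 / c K)

def PathFeasible (a c : ℕ → ℝ) (K : ℕ) (x : ℕ → ℝ) : Prop :=
  ∀ n < K, 0 ≤ pathBudget a c x (n + 1)

lemma pathBudget_succ (a c x : ℕ → ℝ) (q : ℕ) :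
    pathBudget a c x (q + 1) = pathBudget a c x q + (a q - x q ^ 2 / c q) :=
  Finset.sum_range_succ _ q

lemma sum_range_mul_eq_sum_range_sub_mul (M d : ℕ → ℝ) (q : ℕ) :
    ∑ n ∈ Finset.range q, M n * d n =
      ∑ n ∈ Finset.range q, (M n - M (n + 1)) * ∑ k ∈ Finset.range (n + 1), d k
        + M q * ∑ k ∈ Finset.range q, d k := by
  induction q with
  | zero => simp
  | succ q ih => simp only [Finset.sum_range_succ _ q, ih]; ring

section KKT

variable {K : ℕ} {a c x y M : ℕ → ℝ} {γ ν : ℝ}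

/-- `M n` is the tail sum `μₙ + ⋯ + μ_{K-1}` of the multipliers of the budget constraints:
`hM` says `μ ≥ 0`, `hcs` is complementary slackness and `hstat`, `hlast` are stationarity. -/
theorem pathValue_add_sq_le_of_kkt (hc : ∀ n ≤ K, 0 < c n) (hM : ∀ n < K, M (n + 1) ≤ M n)
    (hMK : M K = 0) (hstat : ∀ n < K, x n * (1 + M n) = ν * c n)
    (hlast : γ - ∑ n ∈ Finset.range K, x n = ν * c K)
    (hcs : ∀ n < K, (M n - M (n + 1)) * pathBudget a c x (n + 1) = 0)
    (hy : PathFeasible a c K y) :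
    pathValue a c γ K y + (∑ n ∈ Finset.range K, (y n - x n) ^ 2 / c n
      + (∑ n ∈ Finset.range K, (y n - x n)) ^ 2 / c K) ≤ pathValue a c γ K x := by
  have hM0 : ∀ n ≤ K, 0 ≤ M n := fun n hn =>
    Nat.decreasingInduction (fun k hk ih => ih.trans (hM k hk)) hMK.ge hn
  have hweighted : 0 ≤ ∑ n ∈ Finset.range K, M n * ((x n ^ 2 - y n ^ 2) / c n) := by
    rw [sum_range_mul_eq_sum_range_sub_mul, hMK, zero_mul, add_zero]
    refine Finset.sum_nonneg fun n hn => ?_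
    have hn := Finset.mem_range.mp hn
    have hdiff : ∑ k ∈ Finset.range (n + 1), (x k ^ 2 - y k ^ 2) / c k
        = pathBudget a c y (n + 1) - pathBudget a c x (n + 1) := by
      rw [pathBudget, pathBudget, ← Finset.sum_sub_distrib]
      exact Finset.sum_congr rfl fun k _ => by ring
    rw [hdiff, mul_sub, hcs n hn, sub_zero]
    exact mul_nonneg (sub_nonneg.mpr (hM n hn)) (hy n hn)
  have hterm : ∀ n ∈ Finset.range K, (a n - y n ^ 2 / c n) + (y n - x n) ^ 2 / c n
      ≤ (a n - x n ^ 2 / c n) - 2 * ν * (y n - x n) - M n * ((x n ^ 2 - y n ^ 2) / c n) := by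
    intro n hn
    have hn := Finset.mem_range.mp hn
    have hcn := hc n hn.le
    have hgap : (a n - x n ^ 2 / c n) - 2 * ν * (y n - x n) - M n * ((x n ^ 2 - y n ^ 2) / c n)
        - ((a n - y n ^ 2 / c n) + (y n - x n) ^ 2 / c n) = M n * (y n - x n) ^ 2 / c n := by
      field_simp
      linear_combination (2 * (y n - x n)) * hstat n hn
    have := div_nonneg (mul_nonneg (hM0 n hn.le) (sq_nonneg (y n - x n))) hcn.le
    linarith
  have hlast' : (a K - (γ - ∑ n ∈ Finset.range K, y n) ^ 2 / c K)
        + (∑ n ∈ Finset.range K, (y n - x n)) ^ 2 / c K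
      = (a K - (γ - ∑ n ∈ Finset.range K, x n) ^ 2 / c K)
        + 2 * ν * ∑ n ∈ Finset.range K, (y n - x n) := by
    have hcK := (hc K le_rfl).ne'
    rw [Finset.sum_sub_distrib]
    field_simp
    linear_combination (2 * (∑ n ∈ Finset.range K, y n - ∑ n ∈ Finset.range K, x n)) * hlast
  have hsum := Finset.sum_le_sum hterm
  rw [pathValue, pathValue, pathBudget, pathBudget]
  simp only [Finset.sum_add_distrib, Finset.sum_sub_distrib, ← Finset.mul_sum] at hsum hlast' ⊢
  linarith

theorem pathValue_le_of_kkt (hc : ∀ n ≤ K, 0 < c n) (hM : ∀ n < K, M (n + 1) ≤ M n)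
    (hMK : M K = 0) (hstat : ∀ n < K, x n * (1 + M n) = ν * c n)
    (hlast : γ - ∑ n ∈ Finset.range K, x n = ν * c K)
    (hcs : ∀ n < K, (M n - M (n + 1)) * pathBudget a c x (n + 1) = 0)
    (hy : PathFeasible a c K y) :
    pathValue a c γ K y ≤ pathValue a c γ K x ∧
      (pathValue a c γ K y = pathValue a c γ K x → ∀ n < K, y n = x n) := by
  have hle := pathValue_add_sq_le_of_kkt hc hM hMK hstat hlast hcs hy
  have hnonneg : ∀ n ∈ Finset.range K, 0 ≤ (y n - x n) ^ 2 / c n := fun n hn =>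
    div_nonneg (sq_nonneg _) (hc n (Finset.mem_range.mp hn).le).le
  have hlast_nonneg : 0 ≤ (∑ n ∈ Finset.range K, (y n - x n)) ^ 2 / c K :=
    div_nonneg (sq_nonneg _) (hc K le_rfl).le
  have hsum := Finset.sum_nonneg hnonneg
  refine ⟨by linarith, fun heq n hn => ?_⟩
  have hzero := (Finset.sum_eq_zero_iff_of_nonneg hnonneg).mp (by linarith) n
    (Finset.mem_range.mpr hn)
  rw [div_eq_zero_iff, sq_eq_zero_iff, sub_eq_zero] at hzero
  exact hzero.resolve_right (hc n hn.le).ne'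

end KKT

lemma sum_range_succ_mul_of_jumps {d w : ℕ → ℝ} {q : ℕ}
    (h : ∀ n < q, w (n + 1) ≠ w n → ∑ k ∈ Finset.range (n + 1), d k = 0) :
    ∑ n ∈ Finset.range (q + 1), d n * w n = (∑ n ∈ Finset.range (q + 1), d n) * w q := by
  induction q with
  | zero => simp
  | succ q ih =>
    rw [Finset.sum_range_succ, ih fun n hn => h n (by omega), Finset.sum_range_succ _ (q + 1)]
    by_cases hw : w (q + 1) = w q
    · rw [hw]; ring
    · rw [h q (by omega) hw]; ring

noncomputable def optimalPath (c τ : ℕ → ℝ) (n₀ : ℕ) (ν : ℝ) (n : ℕ) : ℝ :=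
  if n < n₀ then c n / τ n else ν * c n

noncomputable def optimalMultiplier (τ : ℕ → ℝ) (n₀ : ℕ) (ν : ℝ) (n : ℕ) : ℝ :=
  if n < n₀ then ν * τ n - 1 else 0

section OptimalPath

-- `a n` and `c n` are the length and the `σ²`-mass of block `n`, `τ n` the value of `σ̄` on it,
-- and block `n₀` starts at `λ^{l-1}`.
variable {K n₀ : ℕ} {a c τ : ℕ → ℝ} {ν γ : ℝ}

lemma pathBudget_optimalPath_of_lt {q : ℕ} (hq : q < n₀)
    (hτ : ∀ n ≤ q, τ n ≠ 0)
    (hjump : ∀ n < q, τ (n + 1) ≠ τ n →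
      ∑ k ∈ Finset.range (n + 1), c k = ∑ k ∈ Finset.range (n + 1), τ k ^ 2 * a k) :
    pathBudget a c (optimalPath c τ n₀ ν) (q + 1) =
      (∑ n ∈ Finset.range (q + 1), τ n ^ 2 * a n - ∑ n ∈ Finset.range (q + 1), c n) / τ q ^ 2 := by
  have hterm : ∀ n ∈ Finset.range (q + 1), a n - optimalPath c τ n₀ ν n ^ 2 / c n
      = (τ n ^ 2 * a n - c n) * (τ n ^ 2)⁻¹ := by
    intro n hn
    have hn := Finset.mem_range.mp hn
    rw [optimalPath, if_pos (by omega)]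
    field_simp [hτ n (by omega)]
  rw [pathBudget, Finset.sum_congr rfl hterm, sum_range_succ_mul_of_jumps, Finset.sum_sub_distrib,
    div_eq_mul_inv]
  intro n hn hjmp
  rw [Finset.sum_sub_distrib, hjump n hn fun h => hjmp (by rw [h]), sub_self]


lemma pathBudget_optimalPath_eq_zero (hτ : ∀ n < n₀, τ n ≠ 0)
    (hjump : ∀ n, n + 1 < n₀ → τ (n + 1) ≠ τ n →
      ∑ k ∈ Finset.range (n + 1), c k = ∑ k ∈ Finset.range (n + 1), τ k ^ 2 * a k)
    {q : ℕ} (hq : q ≤ n₀)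
    (hbal : ∑ n ∈ Finset.range q, c n = ∑ n ∈ Finset.range q, τ n ^ 2 * a n) :
    pathBudget a c (optimalPath c τ n₀ ν) q = 0 := by
  rcases q with _ | q
  · simp [pathBudget]
  rw [pathBudget_optimalPath_of_lt hq (fun n hn => hτ n (by omega))
    (fun n hn => hjump n (by omega)), hbal, sub_self, zero_div]

lemma pathBudget_optimalPath_of_le {q : ℕ} (hq : n₀ ≤ q) :
    pathBudget a c (optimalPath c τ n₀ ν) q = pathBudget a c (optimalPath c τ n₀ ν) n₀ +
      (∑ n ∈ Finset.Ico n₀ q, a n - ν ^ 2 * ∑ n ∈ Finset.Ico n₀ q, c n) := by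
  rw [pathBudget, pathBudget, ← Finset.sum_range_add_sum_Ico _ hq, Finset.mul_sum,
    ← Finset.sum_sub_distrib]
  congr 1
  refine Finset.sum_congr rfl fun n hn => ?_
  rw [optimalPath, if_neg (by have := Finset.mem_Ico.mp hn; omega), mul_pow, mul_div_assoc,
    sq (c n), mul_self_div_self]

lemma pathBudget_optimalPath_nonneg (ha : ∀ n ≤ K, 0 ≤ a n) (hτ : ∀ n ≤ K, 0 < τ n)
    (hτanti : AntitoneOn τ (Iic K))
    (hdom : ∀ q ≤ K + 1, ∑ n ∈ Finset.range q, c n ≤ ∑ n ∈ Finset.range q, τ n ^ 2 * a n)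
    (hjump : ∀ n < K, τ (n + 1) ≠ τ n →
      ∑ k ∈ Finset.range (n + 1), c k = ∑ k ∈ Finset.range (n + 1), τ k ^ 2 * a k)
    (hn₀ : n₀ ≤ K) (hbal : ∑ n ∈ Finset.range n₀, c n = ∑ n ∈ Finset.range n₀, τ n ^ 2 * a n)
    (hν : 0 ≤ ν) (hνup : ν * τ n₀ ≤ 1) {q : ℕ} (hq : q ≤ K + 1) :
    0 ≤ pathBudget a c (optimalPath c τ n₀ ν) q := by
  rcases le_or_gt q n₀ with hqn₀ | hn₀q
  · rcases q with _ | q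
    · simp [pathBudget]
    rw [pathBudget_optimalPath_of_lt hqn₀ (fun n hn => (hτ n (by omega)).ne')
      (fun n hn => hjump n (by omega))]
    exact div_nonneg (sub_nonneg.mpr (hdom _ hq)) (sq_nonneg _)
  -- Beyond `n₀` the mass `c` is at most `τ n₀ ^ 2` per unit length, and `ν * τ n₀ ≤ 1`.
  have hmass : ∑ n ∈ Finset.Ico n₀ q, c n ≤ τ n₀ ^ 2 * ∑ n ∈ Finset.Ico n₀ q, a n := by
    have h := hdom q hq
    rw [← Finset.sum_range_add_sum_Ico _ hn₀q.le, ← Finset.sum_range_add_sum_Ico _ hn₀q.le,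
      hbal, add_le_add_iff_left] at h
    refine h.trans ?_
    rw [Finset.mul_sum]
    refine Finset.sum_le_sum fun n hn => ?_
    have hn := Finset.mem_Ico.mp hn
    have hτn : τ n ≤ τ n₀ := hτanti (mem_Iic.mpr (by omega)) (mem_Iic.mpr (by omega)) hn.1
    gcongr
    · exact ha n (by omega)
    · exact (hτ n (by omega)).le
  rw [pathBudget_optimalPath_of_le hn₀q.le, pathBudget_optimalPath_eq_zero
    (fun n hn => (hτ n (by omega)).ne') (fun n hn => hjump n (by omega)) le_rfl hbal, zero_add,
    sub_nonneg]
  have hνsq : ν ^ 2 * τ n₀ ^ 2 ≤ 1 := by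
    rw [← mul_pow]; exact pow_le_one₀ (mul_nonneg hν (hτ n₀ hn₀).le) hνup
  have ha' : 0 ≤ ∑ n ∈ Finset.Ico n₀ q, a n :=
    Finset.sum_nonneg fun n hn => ha n (by have := Finset.mem_Ico.mp hn; omega)
  calc ν ^ 2 * ∑ n ∈ Finset.Ico n₀ q, c n
      ≤ ν ^ 2 * (τ n₀ ^ 2 * ∑ n ∈ Finset.Ico n₀ q, a n) := by gcongr
    _ ≤ ∑ n ∈ Finset.Ico n₀ q, a n := by rw [← mul_assoc]; exact mul_le_of_le_one_left ha' hνsq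

lemma sub_sum_optimalPath (hn₀ : n₀ ≤ K)
    (hγ : γ - ∑ n ∈ Finset.range n₀, c n / τ n = ν * ∑ n ∈ Finset.Ico n₀ (K + 1), c n) :
    γ - ∑ n ∈ Finset.range K, optimalPath c τ n₀ ν n = ν * c K := by
  have hlow : ∑ n ∈ Finset.range n₀, optimalPath c τ n₀ ν n = ∑ n ∈ Finset.range n₀, c n / τ n :=
    Finset.sum_congr rfl fun n hn => if_pos (Finset.mem_range.mp hn)
  have hhigh : ∑ n ∈ Finset.Ico n₀ K, optimalPath c τ n₀ ν n = ν * ∑ n ∈ Finset.Ico n₀ K, c n := by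
    rw [Finset.mul_sum]
    exact Finset.sum_congr rfl fun n hn => if_neg (by have := Finset.mem_Ico.mp hn; omega)
  rw [← Finset.sum_range_add_sum_Ico _ hn₀, hlow, hhigh]
  rw [Finset.sum_Ico_succ_top hn₀] at hγ
  linear_combination hγ

lemma pathValue_optimalPath (hτ : ∀ n < n₀, τ n ≠ 0)
    (hjump : ∀ n, n + 1 < n₀ → τ (n + 1) ≠ τ n →
      ∑ k ∈ Finset.range (n + 1), c k = ∑ k ∈ Finset.range (n + 1), τ k ^ 2 * a k)
    (hn₀ : n₀ ≤ K) (hbal : ∑ n ∈ Finset.range n₀, c n = ∑ n ∈ Finset.range n₀, τ n ^ 2 * a n)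
    (hγ : γ - ∑ n ∈ Finset.range n₀, c n / τ n = ν * ∑ n ∈ Finset.Ico n₀ (K + 1), c n) :
    pathValue a c γ K (optimalPath c τ n₀ ν) =
      ∑ n ∈ Finset.Ico n₀ (K + 1), a n - ν ^ 2 * ∑ n ∈ Finset.Ico n₀ (K + 1), c n := by
  have hK : optimalPath c τ n₀ ν K = ν * c K := if_neg (by omega)
  rw [pathValue, sub_sum_optimalPath hn₀ hγ, ← hK, ← pathBudget_succ,
    pathBudget_optimalPath_of_le (by omega), pathBudget_optimalPath_eq_zero hτ hjump le_rfl hbal,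
    zero_add]

lemma optimalMultiplier_succ_le (hτanti : AntitoneOn τ (Iic K)) (hν : 0 ≤ ν)
    (hνlow : 0 < n₀ → 1 ≤ ν * τ (n₀ - 1)) {n : ℕ} (hn : n < K) :
    optimalMultiplier τ n₀ ν (n + 1) ≤ optimalMultiplier τ n₀ ν n := by
  unfold optimalMultiplier
  split_ifs with h1 h2 h2
  · have := hτanti (by simp only [mem_Iic]; omega) (by simp only [mem_Iic]; omega) n.le_succ
    nlinarith
  · omega
  · have := hνlow (by omega)
    rw [show n₀ - 1 = n by omega] at this
    linarith
  · rfl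

lemma optimalPath_stationary (hτ : ∀ n < n₀, τ n ≠ 0) (n : ℕ) :
    optimalPath c τ n₀ ν n * (1 + optimalMultiplier τ n₀ ν n) = ν * c n := by
  unfold optimalPath optimalMultiplier
  split_ifs with h
  · field_simp [hτ n h]; ring
  · ring

lemma optimalMultiplier_complementary (hτ : ∀ n < n₀, τ n ≠ 0)
    (hjump : ∀ n, n + 1 < n₀ → τ (n + 1) ≠ τ n →
      ∑ k ∈ Finset.range (n + 1), c k = ∑ k ∈ Finset.range (n + 1), τ k ^ 2 * a k)
    (hbal : ∑ n ∈ Finset.range n₀, c n = ∑ n ∈ Finset.range n₀, τ n ^ 2 * a n) (n : ℕ) :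
    (optimalMultiplier τ n₀ ν n - optimalMultiplier τ n₀ ν (n + 1)) *
      pathBudget a c (optimalPath c τ n₀ ν) (n + 1) = 0 := by
  rcases lt_trichotomy (n + 1) n₀ with h | h | h
  · by_cases hjmp : τ (n + 1) = τ n
    · simp [optimalMultiplier, h, hjmp, show n < n₀ by omega]
    · rw [pathBudget_optimalPath_eq_zero hτ hjump h.le (hjump n h hjmp), mul_zero]
  · rw [pathBudget_optimalPath_eq_zero hτ hjump h.le (h ▸ hbal), mul_zero]
  · simp [optimalMultiplier, show ¬ n < n₀ by omega, show ¬ n + 1 < n₀ by omega]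

theorem pathValue_le_pathValue_optimalPath (hc : ∀ n ≤ K, 0 < c n) (hτ : ∀ n ≤ K, 0 < τ n)
    (hτanti : AntitoneOn τ (Iic K))
    (hjump : ∀ n < K, τ (n + 1) ≠ τ n →
      ∑ k ∈ Finset.range (n + 1), c k = ∑ k ∈ Finset.range (n + 1), τ k ^ 2 * a k)
    (hn₀ : n₀ ≤ K) (hbal : ∑ n ∈ Finset.range n₀, c n = ∑ n ∈ Finset.range n₀, τ n ^ 2 * a n)
    (hν : 0 ≤ ν) (hνlow : 0 < n₀ → 1 ≤ ν * τ (n₀ - 1))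
    (hγ : γ - ∑ n ∈ Finset.range n₀, c n / τ n = ν * ∑ n ∈ Finset.Ico n₀ (K + 1), c n)
    {y : ℕ → ℝ} (hy : PathFeasible a c K y) :
    pathValue a c γ K y ≤ pathValue a c γ K (optimalPath c τ n₀ ν) ∧
      (pathValue a c γ K y = pathValue a c γ K (optimalPath c τ n₀ ν) →
        ∀ n < K, y n = optimalPath c τ n₀ ν n) := by
  have hτ' : ∀ n < n₀, τ n ≠ 0 := fun n hn => (hτ n (by omega)).ne'
  exact pathValue_le_of_kkt hc (fun n hn => optimalMultiplier_succ_le hτanti hν hνlow hn)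
    (if_neg (by omega)) (fun n _ => optimalPath_stationary hτ' n) (sub_sum_optimalPath hn₀ hγ)
    (fun n _ => optimalMultiplier_complementary hτ' (fun n hn => hjump n (by omega)) hbal n) hy

end OptimalPath

section FinIndexing

variable {K : ℕ} {a c : Fin (K + 1) → ℝ} {a' c' : ℕ → ℝ} {γ : ℝ}

noncomputable def finPathBudget (a c : Fin (K + 1) → ℝ) (x : Fin K → ℝ) (k : Fin K) : ℝ :=
  ∑ i ∈ Finset.Iic k, (a i.castSucc - x i ^ 2 / c i.castSucc)

noncomputable def finPathValue (a c : Fin (K + 1) → ℝ) (γ : ℝ) (x : Fin K → ℝ) : ℝ :=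
  (∑ i, (a i.castSucc - x i ^ 2 / c i.castSucc)) +
    (a (Fin.last K) - (γ - ∑ i, x i) ^ 2 / c (Fin.last K))

lemma finPathBudget_eq_pathBudget (ha : ∀ i, a i = a' i) (hc : ∀ i, c i = c' i) {x : Fin K → ℝ}
    {X : ℕ → ℝ} (hx : ∀ i, x i = X i) (k : Fin K) :
    finPathBudget a c x k = pathBudget a' c' X (k + 1) := by
  rw [finPathBudget, pathBudget, Nat.range_succ_eq_Iic, ← Fin.map_valEmbedding_Iic, Finset.sum_map]
  exact Finset.sum_congr rfl fun i _ => by simp [ha, hc, hx]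

lemma finPathValue_eq_pathValue (ha : ∀ i, a i = a' i) (hc : ∀ i, c i = c' i) {x : Fin K → ℝ}
    {X : ℕ → ℝ} (hx : ∀ i, x i = X i) : finPathValue a c γ x = pathValue a' c' γ K X := by
  rw [finPathValue, pathValue, pathBudget, ← Fin.sum_univ_eq_sum_range,
    ← Fin.sum_univ_eq_sum_range]
  simp [ha, hc, hx]

theorem finPathValue_isMax_of_pathValue (ha : ∀ i, a i = a' i) (hc : ∀ i, c i = c' i)
    {xs : Fin K → ℝ} {X : ℕ → ℝ} (hxs : ∀ i, xs i = X i) (hfeas : PathFeasible a' c' K X)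
    (hmax : ∀ y, PathFeasible a' c' K y → pathValue a' c' γ K y ≤ pathValue a' c' γ K X ∧
      (pathValue a' c' γ K y = pathValue a' c' γ K X → ∀ n < K, y n = X n)) :
    (∀ k, 0 ≤ finPathBudget a c xs k) ∧
    (∀ x, (∀ k, 0 ≤ finPathBudget a c x k) → finPathValue a c γ x ≤ finPathValue a c γ xs) ∧
    (∀ x, (∀ k, 0 ≤ finPathBudget a c x k) → finPathValue a c γ x = finPathValue a c γ xs →
      x = xs) := by
  have hext : ∀ x, (∀ k, 0 ≤ finPathBudget a c x k) →
      ∃ Y : ℕ → ℝ, (∀ i, x i = Y i) ∧ PathFeasible a' c' K Y := by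
    intro x hx
    set Y : ℕ → ℝ := fun n => if h : n < K then x ⟨n, h⟩ else 0
    have hY : ∀ i, x i = Y i := fun i => by simp [Y]
    exact ⟨Y, hY, fun n hn => finPathBudget_eq_pathBudget ha hc hY ⟨n, hn⟩ ▸ hx ⟨n, hn⟩⟩
  refine ⟨fun k => finPathBudget_eq_pathBudget ha hc hxs k ▸ hfeas k k.isLt, fun x hx => ?_,
    fun x hx heq => ?_⟩
  · obtain ⟨Y, hY, hYfeas⟩ := hext x hx
    rw [finPathValue_eq_pathValue ha hc hY, finPathValue_eq_pathValue ha hc hxs]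
    exact (hmax Y hYfeas).1
  · obtain ⟨Y, hY, hYfeas⟩ := hext x hx
    rw [finPathValue_eq_pathValue ha hc hY, finPathValue_eq_pathValue ha hc hxs] at heq
    exact funext fun i => by rw [hY, hxs, (hmax Y hYfeas).2 heq i i.isLt]

end FinIndexing

noncomputable def blockLength (L : ℕ → ℝ) (n : ℕ) : ℝ := L (n + 1) - L n

noncomputable def blockMass (L sv : ℕ → ℝ) (n : ℕ) : ℝ := sv n ^ 2 * blockLength L n

/-- The hypotheses of the theorem with the fine grid indexed by `ℕ`: `L n` is the `n`-th grid
point (constant from `K + 1` on) and `sv n` the value of `σ` on `(L n, L (n + 1)]`, where `σ̄`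
takes the value `σbar (L (n + 1))`. -/
structure StepProfiles (K m : ℕ) (L sv : ℕ → ℝ) (σ : ℝ → ℝ) (lamb : Fin (m + 1) → ℝ)
    (sbv : Fin m → ℝ) (σbar : ℝ → ℝ) : Prop where
  mono : Monotone L
  lt_succ : ∀ n ≤ K, L n < L (n + 1)
  zero : L 0 = 0
  last : L (K + 1) = 1
  sv_pos : ∀ n ≤ K, 0 < sv n
  eq_sv : ∀ n ≤ K, ∀ s ∈ Ioc (L n) (L (n + 1)), σ s = sv n
  coarse_strictMono : StrictMono lamb
  coarse_zero : lamb 0 = 0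
  coarse_last : lamb (Fin.last m) = 1
  sbv_pos : ∀ j, 0 < sbv j
  sbv_anti : Antitone sbv
  eq_sbv : ∀ j, ∀ s ∈ Ioc (lamb j.castSucc) (lamb j.succ), σbar s = sbv j
  subgrid : ∀ j, ∃ n ≤ K + 1, lamb j = L n
  dom : ∀ t ∈ Icc (0 : ℝ) 1, ∫ r in (0 : ℝ)..t, σ r ^ 2 ≤ ∫ r in (0 : ℝ)..t, σbar r ^ 2
  block : ∀ j, ∫ s in lamb j.castSucc..lamb j.succ, σ s ^ 2 =
    sbv j ^ 2 * (lamb j.succ - lamb j.castSucc)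

namespace StepProfiles

variable {K m : ℕ} {L sv : ℕ → ℝ} {σ σbar : ℝ → ℝ} {lamb : Fin (m + 1) → ℝ} {sbv : Fin m → ℝ}

lemma blockLength_nonneg (hS : StepProfiles K m L sv σ lamb sbv σbar) (n : ℕ) :
    0 ≤ blockLength L n :=
  sub_nonneg.mpr (hS.mono n.le_succ)

lemma blockMass_pos (hS : StepProfiles K m L sv σ lamb sbv σbar) {n : ℕ} (hn : n ≤ K) :
    0 < blockMass L sv n :=
  mul_pos (pow_pos (hS.sv_pos n hn) 2) (sub_pos.mpr (hS.lt_succ n hn))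

lemma succ_mem_Ioc (hS : StepProfiles K m L sv σ lamb sbv σbar) {n : ℕ} (hn : n ≤ K) :
    L (n + 1) ∈ Ioc (lamb 0) (lamb (Fin.last m)) := by
  rw [hS.coarse_zero, hS.coarse_last, ← hS.zero, ← hS.last]
  exact ⟨(hS.mono n.zero_le).trans_lt (hS.lt_succ n hn), hS.mono (by omega)⟩

lemma exists_castSucc_eq (hS : StepProfiles K m L sv σ lamb sbv σbar) (j : Fin m) :
    ∃ n ≤ K, lamb j.castSucc = L n := by
  obtain ⟨n, -, h⟩ := hS.subgrid j.castSucc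
  have : L n < L (K + 1) :=
    h ▸ hS.last ▸ hS.coarse_last ▸ hS.coarse_strictMono (Fin.castSucc_lt_last j)
  exact ⟨n, Nat.lt_succ_iff.mp (hS.mono.reflect_lt this), h⟩

lemma eqOn_of_forall_ne (hS : StepProfiles K m L sv σ lamb sbv σbar) {p q : ℕ} (hpq : L p < L q)
    (hq : q ≤ K + 1) (hno : ∀ r, p < r → r < q → ∀ j, lamb j ≠ L r) :
    ∀ s ∈ Ioc (L p) (L q), σbar s = σbar (L q) := by
  refine eqOn_Ioc_of_forall_notMem_Ioo hS.eq_sbv ?_ hpq ?_ fun j ⟨h₁, h₂⟩ => ?_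
  · rw [hS.coarse_zero, ← hS.zero]
    exact hS.mono p.zero_le
  · rw [hS.coarse_last, ← hS.last]
    exact hS.mono hq
  · obtain ⟨r, -, hr⟩ := hS.subgrid j
    rw [hr] at h₁ h₂
    exact hno r (hS.mono.reflect_lt h₁) (hS.mono.reflect_lt h₂) j hr

lemma eqOn_block (hS : StepProfiles K m L sv σ lamb sbv σbar) {n : ℕ} (hn : n ≤ K) :
    ∀ s ∈ Ioc (L n) (L (n + 1)), σbar s = σbar (L (n + 1)) :=
  hS.eqOn_of_forall_ne (hS.lt_succ n hn) (by omega) fun r h₁ h₂ => by omega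

lemma exists_eq_of_ne (hS : StepProfiles K m L sv σ lamb sbv σbar) {n : ℕ} (hn : n < K)
    (hne : σbar (L (n + 1 + 1)) ≠ σbar (L (n + 1))) : ∃ j, lamb j = L (n + 1) := by
  by_contra! hno
  refine hne (hS.eqOn_of_forall_ne ((hS.lt_succ n (by omega)).trans (hS.lt_succ (n + 1) hn))
    (by omega) (fun r h₁ h₂ j => ?_) _ ⟨hS.lt_succ n (by omega), (hS.lt_succ (n + 1) hn).le⟩).symm
  rw [show r = n + 1 by omega]
  exact hno j

lemma sigmaBar_pos (hS : StepProfiles K m L sv σ lamb sbv σbar) {n : ℕ} (hn : n ≤ K) :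
    0 < σbar (L (n + 1)) :=
  pos_of_eqOn_Ioc hS.sbv_pos hS.eq_sbv (hS.succ_mem_Ioc hn)

lemma antitoneOn (hS : StepProfiles K m L sv σ lamb sbv σbar) :
    AntitoneOn (fun n => σbar (L (n + 1))) (Iic K) := fun n hn n' hn' hnn' =>
  antitoneOn_of_eqOn_Ioc hS.coarse_strictMono.monotone hS.sbv_anti hS.eq_sbv (hS.succ_mem_Ioc hn)
    (hS.succ_mem_Ioc hn') (hS.mono (by omega))

lemma intervalIntegrable (hS : StepProfiles K m L sv σ lamb sbv σbar) (F : ℝ → ℝ → ℝ)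
    {p q : ℕ} (hpq : p ≤ q) (hq : q ≤ K + 1) :
    IntervalIntegrable (fun s => F (σ s) (σbar s)) volume (L p) (L q) :=
  intervalIntegrable_of_eqOn_blocks hS.mono hpq fun n hn s hs => by
    rw [hS.eq_sv n (by have := hn.2; omega) s hs, hS.eqOn_block (by have := hn.2; omega) s hs]

lemma integral_eq_sum (hS : StepProfiles K m L sv σ lamb sbv σbar) (F : ℝ → ℝ → ℝ)
    {p q : ℕ} (hpq : p ≤ q) (hq : q ≤ K + 1) :
    ∫ s in L p..L q, F (σ s) (σbar s) =
      ∑ n ∈ Finset.Ico p q, F (sv n) (σbar (L (n + 1))) * blockLength L n :=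
  integral_eq_sum_of_eqOn_blocks hS.mono hpq fun n hn s hs => by
    rw [hS.eq_sv n (by have := hn.2; omega) s hs, hS.eqOn_block (by have := hn.2; omega) s hs]

lemma sum_blockMass_le (hS : StepProfiles K m L sv σ lamb sbv σbar) {q : ℕ} (hq : q ≤ K + 1) :
    ∑ n ∈ Finset.range q, blockMass L sv n ≤
      ∑ n ∈ Finset.range q, σbar (L (n + 1)) ^ 2 * blockLength L n := by
  have h := hS.dom (L q) ⟨hS.zero ▸ hS.mono q.zero_le, hS.last ▸ hS.mono hq⟩
  rw [← hS.zero, hS.integral_eq_sum (fun u _ => u ^ 2) q.zero_le hq,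
    hS.integral_eq_sum (fun _ v => v ^ 2) q.zero_le hq] at h
  rwa [Finset.range_eq_Ico]

lemma integral_sq_eq_integral_sigmaBar_sq (hS : StepProfiles K m L sv σ lamb sbv σbar)
    (j : Fin (m + 1)) : ∫ s in (0 : ℝ)..lamb j, σ s ^ 2 = ∫ s in (0 : ℝ)..lamb j, σbar s ^ 2 := by
  have hint : ∀ F : ℝ → ℝ → ℝ, IntervalIntegrable (fun s => F (σ s) (σbar s)) volume (lamb 0)
      (lamb (Fin.last m)) := fun F => by
    rw [hS.coarse_zero, hS.coarse_last, ← hS.zero, ← hS.last]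
    exact hS.intervalIntegrable F (Nat.zero_le _) le_rfl
  have hblock : ∀ i : Fin m, ∫ s in lamb i.castSucc..lamb i.succ, σ s ^ 2 =
      ∫ s in lamb i.castSucc..lamb i.succ, σbar s ^ 2 := fun i =>
    (hS.block i).trans (integral_eq_of_eqOn_Ioc (hS.coarse_strictMono Fin.castSucc_lt_succ).le
      fun s hs => by rw [hS.eq_sbv i s hs]).symm
  rw [← hS.coarse_zero]
  exact integral_eq_integral_of_blocks hS.coarse_strictMono.monotone (hint fun u _ => u ^ 2)
    (hint fun _ v => v ^ 2) hblock j

lemma sum_blockMass_eq (hS : StepProfiles K m L sv σ lamb sbv σbar) {q : ℕ} (hq : q ≤ K + 1)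
    (hcoarse : ∃ j, lamb j = L q) :
    ∑ n ∈ Finset.range q, blockMass L sv n =
      ∑ n ∈ Finset.range q, σbar (L (n + 1)) ^ 2 * blockLength L n := by
  obtain ⟨j, hj⟩ := hcoarse
  have h := hS.integral_sq_eq_integral_sigmaBar_sq j
  rw [hj, ← hS.zero, hS.integral_eq_sum (fun u _ => u ^ 2) q.zero_le hq,
    hS.integral_eq_sum (fun _ v => v ^ 2) q.zero_le hq] at h
  rwa [Finset.range_eq_Ico]

lemma integral_sq_pos (hS : StepProfiles K m L sv σ lamb sbv σbar) {n₀ : ℕ} (hn₀ : n₀ ≤ K) :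
    0 < ∫ s in L n₀..1, σ s ^ 2 := by
  rw [← hS.last, hS.integral_eq_sum (fun u _ => u ^ 2) (by omega) le_rfl]
  exact Finset.sum_pos (fun n hn => hS.blockMass_pos (by have := (Finset.mem_Ico.mp hn).2; omega))
    ⟨n₀, Finset.mem_Ico.mpr ⟨le_rfl, by omega⟩⟩

lemma integral_div_min_eq (hS : StepProfiles K m L sv σ lamb sbv σbar) {n₀ q : ℕ}
    (hn₀q : n₀ ≤ q) (hq : q ≤ K + 1) (hconst : ∀ s ∈ Ioc (L n₀) (L q), σbar s = σbar (L q)) :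
    ∫ s in (0 : ℝ)..1, σ s ^ 2 / σbar (min s (L q)) =
      (∫ s in (0 : ℝ)..L n₀, σ s ^ 2 / σbar s) + (∫ s in L n₀..1, σ s ^ 2) / σbar (L q) := by
  rw [← hS.zero, ← hS.last]
  exact integral_div_comp_min (hS.mono n₀.zero_le) (hS.mono hn₀q) (hS.mono hq) hconst
    (hS.intervalIntegrable (fun u v => u ^ 2 / v) n₀.zero_le (by omega))
    (hS.intervalIntegrable (fun u _ => u ^ 2) (by omega) le_rfl)

lemma integral_block_div (hS : StepProfiles K m L sv σ lamb sbv σbar) {n : ℕ} (hn : n ≤ K) :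
    ∫ s in L n..L (n + 1), σ s ^ 2 / σbar s = blockMass L sv n / σbar (L (n + 1)) := by
  rw [hS.integral_eq_sum (fun u v => u ^ 2 / v) n.le_succ (by omega), Nat.Ico_succ_singleton,
    Finset.sum_singleton, blockMass]
  ring

lemma integral_block_sq (hS : StepProfiles K m L sv σ lamb sbv σbar) {n : ℕ} (hn : n ≤ K) :
    ∫ s in L n..L (n + 1), σ s ^ 2 = blockMass L sv n := by
  rw [hS.integral_eq_sum (fun u _ => u ^ 2) n.le_succ (by omega), Nat.Ico_succ_singleton,
    Finset.sum_singleton, blockMass]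

lemma integral_div_eq_sum (hS : StepProfiles K m L sv σ lamb sbv σbar) {n₀ : ℕ} (hn₀ : n₀ ≤ K) :
    ∫ s in (0 : ℝ)..L n₀, σ s ^ 2 / σbar s =
      ∑ n ∈ Finset.range n₀, blockMass L sv n / σbar (L (n + 1)) := by
  rw [← hS.zero, hS.integral_eq_sum (fun u v => u ^ 2 / v) n₀.zero_le (by omega),
    Finset.range_eq_Ico]
  exact Finset.sum_congr rfl fun n _ => by rw [blockMass]; ring

lemma integral_sq_eq_sum (hS : StepProfiles K m L sv σ lamb sbv σbar) {n₀ : ℕ} (hn₀ : n₀ ≤ K) :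
    ∫ s in L n₀..1, σ s ^ 2 = ∑ n ∈ Finset.Ico n₀ (K + 1), blockMass L sv n := by
  rw [← hS.last, hS.integral_eq_sum (fun u _ => u ^ 2) (by omega) le_rfl]
  rfl

lemma optimalPath_eq (hS : StepProfiles K m L sv σ lamb sbv σbar) {n₀ n : ℕ} (hn₀ : n₀ ≤ K)
    (hn : n ≤ K) {γ ν : ℝ}
    (hγ : γ - ∫ s in (0 : ℝ)..L n₀, σ s ^ 2 / σbar s = ν * ∫ s in L n₀..1, σ s ^ 2) :
    optimalPath (blockMass L sv) (fun n => σbar (L (n + 1))) n₀ ν n =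
      if L (n + 1) ≤ L n₀ then ∫ s in L n..L (n + 1), σ s ^ 2 / σbar s
      else (∫ s in L n..L (n + 1), σ s ^ 2) / (∫ s in L n₀..1, σ s ^ 2) *
        (γ - ∫ s in (0 : ℝ)..L n₀, σ s ^ 2 / σbar s) := by
  have hlow : L (n + 1) ≤ L n₀ ↔ n < n₀ :=
    ⟨fun h => not_le.mp fun h' => (hS.mono h').trans_lt (hS.lt_succ n hn) |>.not_ge h,
      fun h => hS.mono h⟩
  rw [optimalPath, if_congr hlow rfl rfl, hS.integral_block_div hn, hS.integral_block_sq hn, hγ,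
    div_mul_eq_mul_div, mul_left_comm, mul_div_assoc,
    mul_div_cancel_right₀ _ (hS.integral_sq_pos hn₀).ne']

lemma mul_sigmaBar_le_one (hS : StepProfiles K m L sv σ lamb sbv σbar) {l : Fin m} {n₀ : ℕ}
    (hn₀K : n₀ ≤ K) (hn₀ : lamb l.castSucc = L n₀) {γ ν : ℝ}
    (hγ : γ - ∫ s in (0 : ℝ)..L n₀, σ s ^ 2 / σbar s = ν * ∫ s in L n₀..1, σ s ^ 2)
    (hγup : γ < ∫ s in (0 : ℝ)..1, σ s ^ 2 / σbar (min s (lamb l.succ))) :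
    ν * σbar (L (n₀ + 1)) ≤ 1 := by
  obtain ⟨n₁, hn₁, hn₁'⟩ := hS.subgrid l.succ
  have hlt : L n₀ < L n₁ := hn₀ ▸ hn₁' ▸ hS.coarse_strictMono Fin.castSucc_lt_succ
  have hconst : ∀ s ∈ Ioc (L n₀) (L n₁), σbar s = σbar (L n₁) := by
    rw [← hn₀, ← hn₁']
    intro s hs
    rw [hS.eq_sbv l s hs, hS.eq_sbv l _ ⟨hS.coarse_strictMono Fin.castSucc_lt_succ, le_rfl⟩]
  have hn₀₁ : n₀ < n₁ := hS.mono.reflect_lt hlt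
  rw [hn₁', hS.integral_div_min_eq hn₀₁.le hn₁ hconst,
    ← hconst _ ⟨hS.lt_succ n₀ hn₀K, hS.mono hn₀₁⟩] at hγup
  have hC := hS.integral_sq_pos hn₀K
  have hτ := hS.sigmaBar_pos hn₀K
  have h : ν * σbar (L (n₀ + 1)) * (∫ s in L n₀..1, σ s ^ 2) < 1 * ∫ s in L n₀..1, σ s ^ 2 := by
    rw [one_mul, mul_right_comm, ← lt_div_iff₀ hτ, ← hγ]
    linarith
  exact (lt_of_mul_lt_mul_right h hC.le).le

lemma one_le_mul_sigmaBar (hS : StepProfiles K m L sv σ lamb sbv σbar) {l : Fin m} {n₀ : ℕ}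
    (hn₀K : n₀ ≤ K) (hn₀ : lamb l.castSucc = L n₀) (hpos : 0 < n₀) {γ ν : ℝ}
    (hγ : γ - ∫ s in (0 : ℝ)..L n₀, σ s ^ 2 / σbar s = ν * ∫ s in L n₀..1, σ s ^ 2)
    (hγlow : (if l.castSucc = 0 then (0 : ℝ)
      else ∫ s in (0 : ℝ)..1, σ s ^ 2 / σbar (min s (lamb l.castSucc))) ≤ γ) :
    1 ≤ ν * σbar (L n₀) := by
  have hl : l.castSucc ≠ 0 := fun h => by
    have : L 0 < L n₀ := (hS.lt_succ 0 (by omega)).trans_le (hS.mono hpos)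
    rw [← hn₀, h, hS.coarse_zero, hS.zero] at this
    exact this.false
  rw [if_neg hl, hn₀, hS.integral_div_min_eq le_rfl (by omega)
    (fun s hs => absurd (hs.1.trans_le hs.2) (lt_irrefl _))] at hγlow
  have hC := hS.integral_sq_pos hn₀K
  have hτ := hS.sigmaBar_pos (n := n₀ - 1) (by omega)
  rw [Nat.sub_add_cancel hpos] at hτ
  have h : 1 * (∫ s in L n₀..1, σ s ^ 2) ≤ ν * σbar (L n₀) * ∫ s in L n₀..1, σ s ^ 2 := by
    rw [one_mul, mul_right_comm, ← div_le_iff₀ hτ, ← hγ]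
    linarith
  exact le_of_mul_le_mul_right h hC

lemma nonneg_of_criticalLevel_le (hS : StepProfiles K m L sv σ lamb sbv σbar) {l : Fin m} {n₀ : ℕ}
    (hn₀K : n₀ ≤ K) (hn₀ : lamb l.castSucc = L n₀) {γ ν : ℝ}
    (hγ : γ - ∫ s in (0 : ℝ)..L n₀, σ s ^ 2 / σbar s = ν * ∫ s in L n₀..1, σ s ^ 2)
    (hγlow : (if l.castSucc = 0 then (0 : ℝ)
      else ∫ s in (0 : ℝ)..1, σ s ^ 2 / σbar (min s (lamb l.castSucc))) ≤ γ) :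
    0 ≤ ν := by
  rcases Nat.eq_zero_or_pos n₀ with rfl | hpos
  · have hl : l.castSucc = 0 :=
      hS.coarse_strictMono.injective (hn₀.trans (hS.zero.trans hS.coarse_zero.symm))
    rw [if_pos hl] at hγlow
    have hC := hS.integral_sq_pos hn₀K
    rw [hS.zero] at hC
    rw [hS.zero, intervalIntegral.integral_same, sub_zero] at hγ
    exact nonneg_of_mul_nonneg_left (hγ ▸ hγlow) hC
  · have h := hS.one_le_mul_sigmaBar hn₀K hn₀ hpos hγ hγlow
    have hτ := hS.sigmaBar_pos (n := n₀ - 1) (by omega)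
    rw [Nat.sub_add_cancel hpos] at hτ
    nlinarith

lemma sum_blockMass_eq_of_ne (hS : StepProfiles K m L sv σ lamb sbv σbar) {n : ℕ} (hn : n < K)
    (hne : σbar (L (n + 1 + 1)) ≠ σbar (L (n + 1))) :
    ∑ k ∈ Finset.range (n + 1), blockMass L sv k =
      ∑ k ∈ Finset.range (n + 1), σbar (L (k + 1)) ^ 2 * blockLength L k :=
  hS.sum_blockMass_eq (by omega) ((hS.exists_eq_of_ne hn hne).imp fun _ h => h)

theorem pathFeasible_optimalPath (hS : StepProfiles K m L sv σ lamb sbv σbar) {n₀ : ℕ}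
    (hn₀ : n₀ ≤ K) (hcoarse : ∃ j, lamb j = L n₀) {ν : ℝ} (hν : 0 ≤ ν)
    (hνup : ν * σbar (L (n₀ + 1)) ≤ 1) :
    PathFeasible (blockLength L) (blockMass L sv) K
      (optimalPath (blockMass L sv) (fun n => σbar (L (n + 1))) n₀ ν) := fun n hn =>
  pathBudget_optimalPath_nonneg (fun n _ => hS.blockLength_nonneg n)
    (fun _ hn => hS.sigmaBar_pos hn) hS.antitoneOn (fun _ hq => hS.sum_blockMass_le hq)
    (fun _ hn hne => hS.sum_blockMass_eq_of_ne hn hne) hn₀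
    (hS.sum_blockMass_eq (by omega) hcoarse) hν hνup (by omega)

theorem pathValue_le_optimalPath (hS : StepProfiles K m L sv σ lamb sbv σbar) {n₀ : ℕ}
    (hn₀ : n₀ ≤ K) (hcoarse : ∃ j, lamb j = L n₀) {γ ν : ℝ}
    (hγ : γ - ∫ s in (0 : ℝ)..L n₀, σ s ^ 2 / σbar s = ν * ∫ s in L n₀..1, σ s ^ 2)
    (hν : 0 ≤ ν) (hνlow : 0 < n₀ → 1 ≤ ν * σbar (L n₀)) {y : ℕ → ℝ}
    (hy : PathFeasible (blockLength L) (blockMass L sv) K y) :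
    let X := optimalPath (blockMass L sv) (fun n => σbar (L (n + 1))) n₀ ν
    pathValue (blockLength L) (blockMass L sv) γ K y ≤
        pathValue (blockLength L) (blockMass L sv) γ K X ∧
      (pathValue (blockLength L) (blockMass L sv) γ K y =
          pathValue (blockLength L) (blockMass L sv) γ K X → ∀ n < K, y n = X n) := by
  rw [hS.integral_div_eq_sum hn₀, hS.integral_sq_eq_sum hn₀] at hγ
  exact pathValue_le_pathValue_optimalPath (fun _ hn => hS.blockMass_pos hn)
    (fun _ hn => hS.sigmaBar_pos hn) hS.antitoneOn
    (fun _ hn hne => hS.sum_blockMass_eq_of_ne hn hne) hn₀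
    (hS.sum_blockMass_eq (by omega) hcoarse) hν
    (fun h => (Nat.sub_add_cancel h).symm ▸ hνlow h) hγ hy

theorem pathValue_optimalPath (hS : StepProfiles K m L sv σ lamb sbv σbar) {n₀ : ℕ}
    (hn₀ : n₀ ≤ K) (hcoarse : ∃ j, lamb j = L n₀) {γ ν : ℝ}
    (hγ : γ - ∫ s in (0 : ℝ)..L n₀, σ s ^ 2 / σbar s = ν * ∫ s in L n₀..1, σ s ^ 2) :
    pathValue (blockLength L) (blockMass L sv) γ K
        (optimalPath (blockMass L sv) (fun n => σbar (L (n + 1))) n₀ ν) =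
      (1 - L n₀) - ν ^ 2 * ∫ s in L n₀..1, σ s ^ 2 := by
  rw [hS.integral_div_eq_sum hn₀, hS.integral_sq_eq_sum hn₀] at hγ
  rw [_root_.pathValue_optimalPath (fun _ hn => (hS.sigmaBar_pos (by omega)).ne')
    (fun _ hn hne => hS.sum_blockMass_eq_of_ne (by omega) hne) hn₀
    (hS.sum_blockMass_eq (by omega) hcoarse) hγ, hS.integral_sq_eq_sum hn₀]
  unfold blockLength
  rw [Finset.sum_Ico_sub _ (by omega), hS.last]

end StepProfiles

lemma Fin.clamp_val_eq_self {n : ℕ} (i : Fin (n + 1)) : Fin.clamp i n = i :=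
  Fin.ext (min_eq_left (Nat.lt_succ_iff.mp i.isLt))

theorem stepProfiles_of_fin {K m : ℕ} {lam : Fin (K + 2) → ℝ} (hlam : StrictMono lam)
    (hlam0 : lam 0 = 0) (hlam1 : lam (Fin.last (K + 1)) = 1) {σv : Fin (K + 1) → ℝ}
    (hσv : ∀ i, 0 < σv i) {σ : ℝ → ℝ}
    (hσdef : ∀ i : Fin (K + 1), ∀ s ∈ Ioc (lam i.castSucc) (lam i.succ), σ s = σv i)
    {lamb : Fin (m + 1) → ℝ} (hlambmono : StrictMono lamb) (hlamb0 : lamb 0 = 0)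
    (hlamb1 : lamb (Fin.last m) = 1) {sbv : Fin m → ℝ} (hsbv : ∀ j, 0 < sbv j)
    (hsbvdec : StrictAnti sbv) {σbar : ℝ → ℝ}
    (hσbardef : ∀ j : Fin m, ∀ s ∈ Ioc (lamb j.castSucc) (lamb j.succ), σbar s = sbv j)
    (hsubgrid : ∀ j : Fin (m + 1), ∃ i : Fin (K + 2), lamb j = lam i)
    (hdom : ∀ t ∈ Icc (0 : ℝ) 1, ∫ r in (0 : ℝ)..t, σ r ^ 2 ≤ ∫ r in (0 : ℝ)..t, σbar r ^ 2)
    (hblock : ∀ j : Fin m, ∫ s in lamb j.castSucc..lamb j.succ, σ s ^ 2 =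
      sbv j ^ 2 * (lamb j.succ - lamb j.castSucc)) :
    StepProfiles K m (fun n => lam (Fin.clamp n (K + 1))) (fun n => σv (Fin.clamp n K)) σ lamb sbv
      σbar where
  mono := hlam.monotone.comp Fin.clamp_monotone
  lt_succ n hn := hlam (by simp [Fin.lt_def, Fin.clamp]; omega)
  zero := hlam0
  last := by simpa [Fin.clamp_eq_last] using hlam1
  sv_pos n _ := hσv _
  eq_sv n hn s hs := by
    have e₁ : Fin.clamp n (K + 1) = (⟨n, by omega⟩ : Fin (K + 1)).castSucc :=
      Fin.ext (min_eq_left (by omega))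
    have e₂ : Fin.clamp (n + 1) (K + 1) = (⟨n, by omega⟩ : Fin (K + 1)).succ :=
      Fin.ext (min_eq_left (by omega))
    have e₃ : Fin.clamp n K = ⟨n, by omega⟩ := Fin.ext (min_eq_left hn)
    rw [e₁, e₂] at hs
    rw [e₃]
    exact hσdef _ s hs
  coarse_strictMono := hlambmono
  coarse_zero := hlamb0
  coarse_last := hlamb1
  sbv_pos := hsbv
  sbv_anti := hsbvdec.antitone
  eq_sbv := hσbardef
  subgrid j := by
    obtain ⟨i, hi⟩ := hsubgrid j
    exact ⟨i, by omega, by rw [hi, Fin.clamp_val_eq_self]⟩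
  dom := hdom
  block := hblock

theorem stmt_6_general
    (K m : ℕ)
    (lam : Fin (K + 2) → ℝ) (hlam : StrictMono lam) (hlam0 : lam 0 = 0)
    (hlam1 : lam (Fin.last (K + 1)) = 1)
    (σv : Fin (K + 1) → ℝ) (hσv : ∀ i, 0 < σv i)
    (σ : ℝ → ℝ)
    (hσdef : ∀ i : Fin (K + 1), ∀ s ∈ Set.Ioc (lam i.castSucc) (lam i.succ), σ s = σv i)
    (lamb : Fin (m + 1) → ℝ) (hlambmono : StrictMono lamb) (hlamb0 : lamb 0 = 0)
    (hlamb1 : lamb (Fin.last m) = 1)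
    (sbv : Fin m → ℝ) (hsbv : ∀ j, 0 < sbv j) (hsbvdec : StrictAnti sbv)
    (σbar : ℝ → ℝ)
    (hσbardef : ∀ j : Fin m, ∀ s ∈ Set.Ioc (lamb j.castSucc) (lamb j.succ), σbar s = sbv j)
    (hsubgrid : ∀ j : Fin (m + 1), ∃ i : Fin (K + 2), lamb j = lam i)
    (hdom : ∀ t ∈ Set.Icc (0:ℝ) 1,
      (∫ r in (0:ℝ)..t, (σ r) ^ 2) ≤ ∫ r in (0:ℝ)..t, (σbar r) ^ 2)
    (hblock : ∀ j : Fin m, (∫ s in (lamb j.castSucc)..(lamb j.succ), (σ s) ^ 2)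
      = (sbv j) ^ 2 * (lamb j.succ - lamb j.castSucc))
    (l : Fin m) (γ : ℝ)
    (hγlow : (if l.castSucc = 0 then (0:ℝ)
      else ∫ s in (0:ℝ)..1, (σ s) ^ 2 / σbar (min s (lamb l.castSucc))) ≤ γ)
    (hγup : γ < ∫ s in (0:ℝ)..1, (σ s) ^ 2 / σbar (min s (lamb l.succ)))
    (xstar : Fin K → ℝ)
    (hxstar : ∀ i : Fin K, xstar i =
      if lam (i.castSucc).succ ≤ lamb l.castSucc then
        ∫ s in (lam (i.castSucc).castSucc)..(lam (i.castSucc).succ), (σ s) ^ 2 / σbar s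
      else
        (∫ s in (lam (i.castSucc).castSucc)..(lam (i.castSucc).succ), (σ s) ^ 2) /
          (∫ s in (lamb l.castSucc)..1, (σ s) ^ 2) *
          (γ - ∫ s in (0:ℝ)..(lamb l.castSucc), (σ s) ^ 2 / σbar s)) :
    (∀ k : Fin K, 0 ≤ ∑ i ∈ Finset.Iic k,
        ((lam (i.castSucc).succ - lam (i.castSucc).castSucc) -
          (xstar i) ^ 2 / ((σv i.castSucc) ^ 2 *
            (lam (i.castSucc).succ - lam (i.castSucc).castSucc)))) ∧
    (∀ x : Fin K → ℝ,
      (∀ k : Fin K, 0 ≤ ∑ i ∈ Finset.Iic k,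
        ((lam (i.castSucc).succ - lam (i.castSucc).castSucc) -
          (x i) ^ 2 / ((σv i.castSucc) ^ 2 *
            (lam (i.castSucc).succ - lam (i.castSucc).castSucc)))) →
      (∑ i : Fin K, ((lam (i.castSucc).succ - lam (i.castSucc).castSucc) -
          (x i) ^ 2 / ((σv i.castSucc) ^ 2 *
            (lam (i.castSucc).succ - lam (i.castSucc).castSucc)))) +
        ((lam (Fin.last K).succ - lam (Fin.last K).castSucc) -
          (γ - ∑ i, x i) ^ 2 / ((σv (Fin.last K)) ^ 2 *
            (lam (Fin.last K).succ - lam (Fin.last K).castSucc)))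
      ≤ (∑ i : Fin K, ((lam (i.castSucc).succ - lam (i.castSucc).castSucc) -
          (xstar i) ^ 2 / ((σv i.castSucc) ^ 2 *
            (lam (i.castSucc).succ - lam (i.castSucc).castSucc)))) +
        ((lam (Fin.last K).succ - lam (Fin.last K).castSucc) -
          (γ - ∑ i, xstar i) ^ 2 / ((σv (Fin.last K)) ^ 2 *
            (lam (Fin.last K).succ - lam (Fin.last K).castSucc)))) ∧
    (∀ x : Fin K → ℝ,
      (∀ k : Fin K, 0 ≤ ∑ i ∈ Finset.Iic k,
        ((lam (i.castSucc).succ - lam (i.castSucc).castSucc) -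
          (x i) ^ 2 / ((σv i.castSucc) ^ 2 *
            (lam (i.castSucc).succ - lam (i.castSucc).castSucc)))) →
      ((∑ i : Fin K, ((lam (i.castSucc).succ - lam (i.castSucc).castSucc) -
          (x i) ^ 2 / ((σv i.castSucc) ^ 2 *
            (lam (i.castSucc).succ - lam (i.castSucc).castSucc)))) +
        ((lam (Fin.last K).succ - lam (Fin.last K).castSucc) -
          (γ - ∑ i, x i) ^ 2 / ((σv (Fin.last K)) ^ 2 *
            (lam (Fin.last K).succ - lam (Fin.last K).castSucc)))
      = (∑ i : Fin K, ((lam (i.castSucc).succ - lam (i.castSucc).castSucc) -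
          (xstar i) ^ 2 / ((σv i.castSucc) ^ 2 *
            (lam (i.castSucc).succ - lam (i.castSucc).castSucc)))) +
        ((lam (Fin.last K).succ - lam (Fin.last K).castSucc) -
          (γ - ∑ i, xstar i) ^ 2 / ((σv (Fin.last K)) ^ 2 *
            (lam (Fin.last K).succ - lam (Fin.last K).castSucc)))) →
      x = xstar) ∧
    (∑ i : Fin K, ((lam (i.castSucc).succ - lam (i.castSucc).castSucc) -
        (xstar i) ^ 2 / ((σv i.castSucc) ^ 2 *
          (lam (i.castSucc).succ - lam (i.castSucc).castSucc)))) +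
      ((lam (Fin.last K).succ - lam (Fin.last K).castSucc) -
        (γ - ∑ i, xstar i) ^ 2 / ((σv (Fin.last K)) ^ 2 *
          (lam (Fin.last K).succ - lam (Fin.last K).castSucc)))
    = (1 - lamb l.castSucc) -
        (γ - ∫ s in (0:ℝ)..(lamb l.castSucc), (σ s) ^ 2 / σbar s) ^ 2 /
          ∫ s in (lamb l.castSucc)..1, (σ s) ^ 2 := by
  have hS := stepProfiles_of_fin hlam hlam0 hlam1 hσv hσdef hlambmono hlamb0 hlamb1 hsbv hsbvdec
    hσbardef hsubgrid hdom hblock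
  set L : ℕ → ℝ := fun n => lam (Fin.clamp n (K + 1))
  set sv : ℕ → ℝ := fun n => σv (Fin.clamp n K)
  have hlamL : ∀ i, lam i = L i := fun i => congrArg lam (Fin.clamp_val_eq_self i).symm
  obtain ⟨n₀, hn₀K, hn₀⟩ := hS.exists_castSucc_eq l
  set ν := (γ - ∫ s in (0:ℝ)..L n₀, σ s ^ 2 / σbar s) / ∫ s in L n₀..1, σ s ^ 2
  have hγν : γ - ∫ s in (0:ℝ)..L n₀, σ s ^ 2 / σbar s = ν * ∫ s in L n₀..1, σ s ^ 2 :=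
    (div_mul_cancel₀ _ (hS.integral_sq_pos hn₀K).ne').symm
  have ha : ∀ i : Fin (K + 1), lam i.succ - lam i.castSucc = blockLength L i := fun i => by
    rw [hlamL, hlamL, Fin.val_succ, Fin.val_castSucc]; rfl
  have hc : ∀ i : Fin (K + 1), σv i ^ 2 * (lam i.succ - lam i.castSucc) = blockMass L sv i :=
    fun i => by rw [ha, blockMass, show sv i = σv i from congrArg σv (Fin.clamp_val_eq_self i)]
  have hX : ∀ i : Fin K,
      xstar i = optimalPath (blockMass L sv) (fun n => σbar (L (n + 1))) n₀ ν i := fun i => by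
    rw [hxstar i, hS.optimalPath_eq hn₀K (by omega) hγν]
    simp only [hlamL, hn₀, Fin.val_succ, Fin.val_castSucc]
  have hν := hS.nonneg_of_criticalLevel_le hn₀K hn₀ hγν hγlow
  obtain ⟨h₁, h₂, h₃⟩ := finPathValue_isMax_of_pathValue (γ := γ) ha hc hX
    (hS.pathFeasible_optimalPath hn₀K ⟨_, hn₀⟩ hν (hS.mul_sigmaBar_le_one hn₀K hn₀ hγν hγup))
    (fun y hy => hS.pathValue_le_optimalPath hn₀K ⟨_, hn₀⟩ hγν hν
      (fun h => hS.one_le_mul_sigmaBar hn₀K hn₀ h hγν hγlow) hy)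
  refine ⟨h₁, h₂, h₃, (finPathValue_eq_pathValue ha hc hX).trans ?_⟩
  rw [hS.pathValue_optimalPath hn₀K ⟨_, hn₀⟩ hγν, hn₀, hγν]
  field_simp [(hS.integral_sq_pos hn₀K).ne']

/-- Optimal path for γ-high points (KKT): with M = K+1 scales, γ^{l-1} ≤ γ < γ^l, maximizing
f(x₁,…,x_{M-1}) = Σᵢ(∇λᵢ − xᵢ²/(σᵢ²∇λᵢ)) + (∇λ_M − (γ−Σxᵢ)²/(σ_M²∇λ_M)) under the cumulative
constraints has a unique maximizer given by the optimal path, with maximum value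
E_γ = (1 − λ^{l-1}) − (γ − ∫₀^{λ^{l-1}} σ²/σ̄)²/∫_{λ^{l-1}}^1 σ². -/
theorem stmt_6
    (K m : ℕ) (hm : 0 < m)
    (lam : Fin (K + 2) → ℝ) (hlam : StrictMono lam) (hlam0 : lam 0 = 0)
    (hlam1 : lam (Fin.last (K + 1)) = 1)
    (σv : Fin (K + 1) → ℝ) (hσv : ∀ i, 0 < σv i)
    (σ : ℝ → ℝ) (hσ0 : σ 0 = σv 0)
    (hσdef : ∀ i : Fin (K + 1), ∀ s ∈ Set.Ioc (lam i.castSucc) (lam i.succ), σ s = σv i)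
    (lamb : Fin (m + 1) → ℝ) (hlambmono : StrictMono lamb) (hlamb0 : lamb 0 = 0)
    (hlamb1 : lamb (Fin.last m) = 1)
    (sbv : Fin m → ℝ) (hsbv : ∀ j, 0 < sbv j) (hsbvdec : StrictAnti sbv)
    (σbar : ℝ → ℝ) (hσbar0 : σbar 0 = sbv ⟨0, hm⟩)
    (hσbardef : ∀ j : Fin m, ∀ s ∈ Set.Ioc (lamb j.castSucc) (lamb j.succ), σbar s = sbv j)
    (hsubgrid : ∀ j : Fin (m + 1), ∃ i : Fin (K + 2), lamb j = lam i)
    (hdom : ∀ t ∈ Set.Icc (0:ℝ) 1,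
      (∫ r in (0:ℝ)..t, (σ r) ^ 2) ≤ ∫ r in (0:ℝ)..t, (σbar r) ^ 2)
    (hblock : ∀ j : Fin m, (∫ s in (lamb j.castSucc)..(lamb j.succ), (σ s) ^ 2)
      = (sbv j) ^ 2 * (lamb j.succ - lamb j.castSucc))
    (l : Fin m) (γ : ℝ)
    (hγlow : (if l.castSucc = 0 then (0:ℝ)
      else ∫ s in (0:ℝ)..1, (σ s) ^ 2 / σbar (min s (lamb l.castSucc))) ≤ γ)
    (hγup : γ < ∫ s in (0:ℝ)..1, (σ s) ^ 2 / σbar (min s (lamb l.succ)))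
    (xstar : Fin K → ℝ)
    (hxstar : ∀ i : Fin K, xstar i =
      if lam (i.castSucc).succ ≤ lamb l.castSucc then
        ∫ s in (lam (i.castSucc).castSucc)..(lam (i.castSucc).succ), (σ s) ^ 2 / σbar s
      else
        (∫ s in (lam (i.castSucc).castSucc)..(lam (i.castSucc).succ), (σ s) ^ 2) /
          (∫ s in (lamb l.castSucc)..1, (σ s) ^ 2) *
          (γ - ∫ s in (0:ℝ)..(lamb l.castSucc), (σ s) ^ 2 / σbar s)) :
    (∀ k : Fin K, 0 ≤ ∑ i ∈ Finset.Iic k,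
        ((lam (i.castSucc).succ - lam (i.castSucc).castSucc) -
          (xstar i) ^ 2 / ((σv i.castSucc) ^ 2 *
            (lam (i.castSucc).succ - lam (i.castSucc).castSucc)))) ∧
    (∀ x : Fin K → ℝ,
      (∀ k : Fin K, 0 ≤ ∑ i ∈ Finset.Iic k,
        ((lam (i.castSucc).succ - lam (i.castSucc).castSucc) -
          (x i) ^ 2 / ((σv i.castSucc) ^ 2 *
            (lam (i.castSucc).succ - lam (i.castSucc).castSucc)))) →
      (∑ i : Fin K, ((lam (i.castSucc).succ - lam (i.castSucc).castSucc) -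
          (x i) ^ 2 / ((σv i.castSucc) ^ 2 *
            (lam (i.castSucc).succ - lam (i.castSucc).castSucc)))) +
        ((lam (Fin.last K).succ - lam (Fin.last K).castSucc) -
          (γ - ∑ i, x i) ^ 2 / ((σv (Fin.last K)) ^ 2 *
            (lam (Fin.last K).succ - lam (Fin.last K).castSucc)))
      ≤ (∑ i : Fin K, ((lam (i.castSucc).succ - lam (i.castSucc).castSucc) -
          (xstar i) ^ 2 / ((σv i.castSucc) ^ 2 *
            (lam (i.castSucc).succ - lam (i.castSucc).castSucc)))) +
        ((lam (Fin.last K).succ - lam (Fin.last K).castSucc) -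
          (γ - ∑ i, xstar i) ^ 2 / ((σv (Fin.last K)) ^ 2 *
            (lam (Fin.last K).succ - lam (Fin.last K).castSucc)))) ∧
    (∀ x : Fin K → ℝ,
      (∀ k : Fin K, 0 ≤ ∑ i ∈ Finset.Iic k,
        ((lam (i.castSucc).succ - lam (i.castSucc).castSucc) -
          (x i) ^ 2 / ((σv i.castSucc) ^ 2 *
            (lam (i.castSucc).succ - lam (i.castSucc).castSucc)))) →
      ((∑ i : Fin K, ((lam (i.castSucc).succ - lam (i.castSucc).castSucc) -
          (x i) ^ 2 / ((σv i.castSucc) ^ 2 *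
            (lam (i.castSucc).succ - lam (i.castSucc).castSucc)))) +
        ((lam (Fin.last K).succ - lam (Fin.last K).castSucc) -
          (γ - ∑ i, x i) ^ 2 / ((σv (Fin.last K)) ^ 2 *
            (lam (Fin.last K).succ - lam (Fin.last K).castSucc)))
      = (∑ i : Fin K, ((lam (i.castSucc).succ - lam (i.castSucc).castSucc) -
          (xstar i) ^ 2 / ((σv i.castSucc) ^ 2 *
            (lam (i.castSucc).succ - lam (i.castSucc).castSucc)))) +
        ((lam (Fin.last K).succ - lam (Fin.last K).castSucc) -
          (γ - ∑ i, xstar i) ^ 2 / ((σv (Fin.last K)) ^ 2 *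
            (lam (Fin.last K).succ - lam (Fin.last K).castSucc)))) →
      x = xstar) ∧
    (∑ i : Fin K, ((lam (i.castSucc).succ - lam (i.castSucc).castSucc) -
        (xstar i) ^ 2 / ((σv i.castSucc) ^ 2 *
          (lam (i.castSucc).succ - lam (i.castSucc).castSucc)))) +
      ((lam (Fin.last K).succ - lam (Fin.last K).castSucc) -
        (γ - ∑ i, xstar i) ^ 2 / ((σv (Fin.last K)) ^ 2 *
          (lam (Fin.last K).succ - lam (Fin.last K).castSucc)))
    = (1 - lamb l.castSucc) -
        (γ - ∫ s in (0:ℝ)..(lamb l.castSucc), (σ s) ^ 2 / σbar s) ^ 2 /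
          ∫ s in (lamb l.castSucc)..1, (σ s) ^ 2 :=
  stmt_6_general K m lam hlam hlam0 hlam1 σv hσv σ hσdef lamb hlambmono hlamb0 hlamb1 sbv hsbv
    hsbvdec σbar hσbardef hsubgrid hdom hblock l γ hγlow hγup xstar hxstar
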